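/- There exists a function R: (0,π) → ℝ, independent of ε, such that for every ε with 0 ≤ ε < 1 and every (θ,φ) with 0 < θ < π, φ ∈ ℝ, the function h_ε(θ,φ) = (3cos²θ - 1) + ε²·[(-9/980)·(35cos⁴θ - 30cos²θ + 3) + 2/5] satisfies Δ₁ h_ε = (-6 + (12/7)ε²)·h_ε + ε⁴·R(θ). In other words, to first order in ε² the perturbed spherical harmonic with l = 2, m = 0 is an eigenfunction of Δ₁ with eigenvalue -6 + (12/7)ε². -/

import Mathlib

/-!
For a zonal function `u(θ, φ) = g(cos θ)` the chain rule turns `Δ₁` into the Legendre operator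
`(1 - x²) g'' - 2x g'` perturbed by `-(3/4) ε² (1 - x²)² g''`, with `x = cos θ`. Applied to
`g = P + ε² Q` with `P = 3x² - 1` (so that the Legendre operator gives `-6 P`), the terms of order
`ε⁰` and `ε²` match `(-6 + (12/7) ε²) g`, and what is left is `ε⁴` times a polynomial in `cos θ`.
-/

open Real

/-- `Δ₁` of the paper, for `u(θ, φ)` written as `u θ φ`. -/
noncomputable def truncLaplacian (ε : ℝ) (u : ℝ → ℝ → ℝ) (θ φ : ℝ) : ℝ :=
  ((4 - 5 * ε ^ 2 * sin θ ^ 2) / (4 * sin θ ^ 2)) * deriv (deriv (u θ)) φ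
  + (1 - 3 / 4 * ε ^ 2 * sin θ ^ 2) * deriv (deriv (fun t => u t φ)) θ
  + (cos θ / sin θ) * (1 + 3 / 4 * ε ^ 2 * sin θ ^ 2) * deriv (fun t => u t φ) θ

theorem truncLaplacian_comp_cos {g g' : ℝ → ℝ} {g'' : ℝ} (ε : ℝ) {θ : ℝ} (φ : ℝ)
    (hg : ∀ x, HasDerivAt g (g' x) x) (hg' : HasDerivAt g' g'' (cos θ))
    (hθ : sin θ ≠ 0) :
    truncLaplacian ε (fun t _ => g (cos t)) θ φ =
      (1 - cos θ ^ 2) * g'' - 2 * cos θ * g' (cos θ)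
        - 3 / 4 * ε ^ 2 * (1 - cos θ ^ 2) ^ 2 * g'' := by
  have hfirst : deriv (fun t => g (cos t)) = fun t => g' (cos t) * -sin t :=
    funext fun t => ((hg (cos t)).comp t (hasDerivAt_cos t)).deriv
  have hsecond : HasDerivAt (fun t => g' (cos t) * -sin t)
      (g'' * -sin θ * -sin θ + g' (cos θ) * -cos θ) θ :=
    (hg'.comp θ (hasDerivAt_cos θ)).mul (hasDerivAt_sin θ).neg
  simp only [truncLaplacian, deriv_const', hfirst, hsecond.deriv]
  field_simp
  rw [sin_sq]
  ring

/-- To first order in `ε²`, the perturbed spherical harmonic with `l = 2`, `m = 0`,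
`h_ε(θ,φ) = (3cos²θ - 1) + ε²·[(-9/980)·(35cos⁴θ - 30cos²θ + 3) + 2/5]`, is an eigenfunction
of `Δ₁` with eigenvalue `-6 + (12/7)ε²`: there is an `ε`-independent remainder `R(θ)` with
`Δ₁ h_ε = (-6 + (12/7)ε²)·h_ε + ε⁴·R(θ)`. -/
theorem truncLaplacian_l2m0_eigen :
    ∃ R : ℝ → ℝ, ∀ ε : ℝ, 0 ≤ ε → ε < 1 →
      ∀ θ φ : ℝ, 0 < θ → θ < Real.pi →
        truncLaplacian ε
            (fun θ' _ => (3 * Real.cos θ' ^ 2 - 1) +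
              ε ^ 2 * ((-9 / 980) * (35 * Real.cos θ' ^ 4 - 30 * Real.cos θ' ^ 2 + 3) + 2 / 5))
            θ φ =
          (-6 + 12 / 7 * ε ^ 2) *
            ((3 * Real.cos θ ^ 2 - 1) +
              ε ^ 2 * ((-9 / 980) * (35 * Real.cos θ ^ 4 - 30 * Real.cos θ ^ 2 + 3) + 2 / 5))
          + ε ^ 4 * R θ := by
  refine ⟨fun θ => 81 / 28 * cos θ ^ 6 - 1107 / 196 * cos θ ^ 4
      + 4455 / 1372 * cos θ ^ 2 - 1443 / 1372, fun ε _ _ θ φ hθ0 hθπ => ?_⟩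
  have hg (x : ℝ) : HasDerivAt
      (fun x => (3 * x ^ 2 - 1) + ε ^ 2 * ((-9 / 980) * (35 * x ^ 4 - 30 * x ^ 2 + 3) + 2 / 5))
      (6 * x + ε ^ 2 * ((-9 / 980) * (140 * x ^ 3 - 60 * x))) x := by
    have hx2 := (hasDerivAt_id' x).pow 2
    refine (((hx2.const_mul 3).sub_const 1).add
      (((((hasDerivAt_id' x).pow 4).const_mul 35).sub (hx2.const_mul 30)).add_const 3
        |>.const_mul (-9 / 980) |>.add_const (2 / 5) |>.const_mul (ε ^ 2))).congr_deriv ?_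
    ring
  have hg' (x : ℝ) : HasDerivAt (fun x => 6 * x + ε ^ 2 * ((-9 / 980) * (140 * x ^ 3 - 60 * x)))
      (6 + ε ^ 2 * ((-9 / 980) * (420 * x ^ 2 - 60))) x := by
    refine (((hasDerivAt_id' x).const_mul 6).add
      (((((hasDerivAt_id' x).pow 3).const_mul 140).sub ((hasDerivAt_id' x).const_mul 60))
        |>.const_mul (-9 / 980) |>.const_mul (ε ^ 2))).congr_deriv ?_
    ring
  rw [truncLaplacian_comp_cos ε φ hg (hg' (cos θ)) (sin_pos_of_pos_of_lt_pi hθ0 hθπ).ne']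
  ring
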